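/- Consider policies with softmax parameterization updated by exponentiated advantage weights: π^{k+1}(a|s) = π^k(a|s)·exp(η·H·Â^k(s,a))/Z_k(s), where Â^k is the advantage of π^k in an MDP M̂ and Z_k(s) is the normalizer. Then for every k, the improvement in M̂ satisfies Ĵ(π^{k+1}) - Ĵ(π^k) ≥ (1/η) · E_{s ~ d^{π^{k+1}}}[ log Z_k(s) ], and moreover log Z_k(s) ≥ 0 for all s. -/

import Mathlib

open Finset

/-- State distribution at time `t` under stochastic policy `π`. -/
noncomputable def stateDist {S A : Type*} [Fintype S] [Fintype A]
    (P : S → A → S → ℝ) (π : S → A → ℝ) (ρ : S → ℝ) : ℕ → S → ℝ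
  | 0 => ρ
  | (t + 1) => fun s' => ∑ s, ∑ a, stateDist P π ρ t s * π s a * P s a s'

/-- Expected discounted return `J(π)` in the (empirical) MDP `M̂`. -/
noncomputable def Jret {S A : Type*} [Fintype S] [Fintype A]
    (P : S → A → S → ℝ) (π : S → A → ℝ) (ρ : S → ℝ) (r : S → A → ℝ) (γ : ℝ) : ℝ :=
  ∑' t : ℕ, γ ^ t * ∑ s, ∑ a, stateDist P π ρ t s * π s a * r s a

/-- Value function `V^π(s)`. -/
noncomputable def Vval {S A : Type*} [Fintype S] [Fintype A] [DecidableEq S]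
    (P : S → A → S → ℝ) (π : S → A → ℝ) (r : S → A → ℝ) (γ : ℝ) (s0 : S) : ℝ :=
  Jret P π (fun s => if s = s0 then 1 else 0) r γ

/-- Q-function `Q^π(s,a)`. -/
noncomputable def Qval {S A : Type*} [Fintype S] [Fintype A] [DecidableEq S]
    (P : S → A → S → ℝ) (π : S → A → ℝ) (r : S → A → ℝ) (γ : ℝ) (s : S) (a : A) : ℝ :=
  r s a + γ * ∑ s', P s a s' * Vval P π r γ s'

/-- Advantage function `A^π(s,a) = Q^π(s,a) - V^π(s)`. -/
noncomputable def Aval {S A : Type*} [Fintype S] [Fintype A] [DecidableEq S]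
    (P : S → A → S → ℝ) (π : S → A → ℝ) (r : S → A → ℝ) (γ : ℝ) (s : S) (a : A) : ℝ :=
  Qval P π r γ s a - Vval P π r γ s

/-- Normalized discounted state occupancy `d^π(s)`. -/
noncomputable def dOcc {S A : Type*} [Fintype S] [Fintype A]
    (P : S → A → S → ℝ) (π : S → A → ℝ) (ρ : S → ℝ) (γ : ℝ) (s : S) : ℝ :=
  (1 - γ) * ∑' t : ℕ, γ ^ t * stateDist P π ρ t s

/-- Normalizer `Z_k(s)` of the exponentiated-advantage policy update. -/
noncomputable def Znorm {S A : Type*} [Fintype S] [Fintype A] [DecidableEq S]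
    (P : S → A → S → ℝ) (r : S → A → ℝ) (γ η H : ℝ) (π : ℕ → S → A → ℝ) (k : ℕ)
    (s : S) : ℝ :=
  ∑ a, π k s a * Real.exp (η * H * Aval P (π k) r γ s a)

/-!
Write the MDP in matrix form: `P^π s s' = ∑ₐ π(a|s) P(s'|s,a)` is row-stochastic, so the Neumann
series `∑ₜ γᵗ (P^π)ᵗ` converges to `(1 - γ P^π)⁻¹`. This turns every quantity into finite linear
algebra: `V^π = (1 - γ P^π)⁻¹ r^π`, `J(π) = ρ ⬝ V^π`, and `d^π = (1 - γ) ρ (1 - γ P^π)⁻¹`. Then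
`E_{a∼π}[A^{π'}(s,a)] = (r^π - (1 - γ P^π) V^{π'})(s)`, and pairing with `ρ (1 - γ P^π)⁻¹` gives the
performance difference lemma. The update is an exponential-weights step, for which
`log Z ≤ E_{a∼π^{k+1}}[η H Â^k(s,a)]` (the gap is a KL divergence), while `log Z ≥ 0` because
`E_{a∼π^k}[Â^k(s,a)] = 0` by the Bellman equation.
-/

open Matrix

namespace Matrix

variable {n : Type*} [Fintype n] [DecidableEq n] {M : Matrix n n ℝ} {γ : ℝ}

lemma summable_pow_smul_pow_of_mem_rowStochastic (hM : M ∈ rowStochastic ℝ n)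
    (hγ0 : 0 ≤ γ) (hγ1 : γ < 1) : Summable fun t : ℕ => γ ^ t • M ^ t := by
  refine Pi.summable.mpr fun i => Pi.summable.mpr fun j => ?_
  have hMt := pow_mem hM
  refine (summable_geometric_of_lt_one hγ0 hγ1).of_nonneg_of_le (fun t => ?_) (fun t => ?_)
  · exact mul_nonneg (pow_nonneg hγ0 t) (nonneg_of_mem_rowStochastic (hMt t))
  · exact mul_le_of_le_one_right (pow_nonneg hγ0 t) (le_one_of_mem_rowStochastic (hMt t))

lemma tsum_pow_smul_pow_mul_one_sub_smul (hM : M ∈ rowStochastic ℝ n)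
    (hγ0 : 0 ≤ γ) (hγ1 : γ < 1) : (∑' t : ℕ, γ ^ t • M ^ t) * (1 - γ • M) = 1 := by
  have hsum := summable_pow_smul_pow_of_mem_rowStochastic hM hγ0 hγ1
  have hshift : (∑' t : ℕ, γ ^ t • M ^ t) = 1 + (∑' t : ℕ, γ ^ t • M ^ t) * (γ • M) := by
    conv_lhs => rw [hsum.tsum_eq_zero_add]
    rw [← hsum.tsum_mul_right, pow_zero, pow_zero, one_smul]
    exact congrArg _ (tsum_congr fun t => by rw [pow_succ, pow_succ, smul_mul_smul_comm])
  rw [mul_sub, mul_one]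
  exact sub_eq_of_eq_add hshift

lemma inv_one_sub_smul_of_mem_rowStochastic (hM : M ∈ rowStochastic ℝ n)
    (hγ0 : 0 ≤ γ) (hγ1 : γ < 1) : (1 - γ • M)⁻¹ = ∑' t : ℕ, γ ^ t • M ^ t :=
  inv_eq_left_inv (tsum_pow_smul_pow_mul_one_sub_smul hM hγ0 hγ1)

lemma hasSum_pow_smul_pow_of_mem_rowStochastic (hM : M ∈ rowStochastic ℝ n)
    (hγ0 : 0 ≤ γ) (hγ1 : γ < 1) : HasSum (fun t : ℕ => γ ^ t • M ^ t) (1 - γ • M)⁻¹ := by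
  rw [inv_one_sub_smul_of_mem_rowStochastic hM hγ0 hγ1]
  exact (summable_pow_smul_pow_of_mem_rowStochastic hM hγ0 hγ1).hasSum

lemma inv_one_sub_smul_mul_of_mem_rowStochastic (hM : M ∈ rowStochastic ℝ n)
    (hγ0 : 0 ≤ γ) (hγ1 : γ < 1) : (1 - γ • M)⁻¹ * (1 - γ • M) = 1 := by
  rw [inv_one_sub_smul_of_mem_rowStochastic hM hγ0 hγ1]
  exact tsum_pow_smul_pow_mul_one_sub_smul hM hγ0 hγ1

lemma one_sub_smul_mul_inv_of_mem_rowStochastic (hM : M ∈ rowStochastic ℝ n)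
    (hγ0 : 0 ≤ γ) (hγ1 : γ < 1) : (1 - γ • M) * (1 - γ • M)⁻¹ = 1 :=
  mul_eq_one_comm.mp (inv_one_sub_smul_mul_of_mem_rowStochastic hM hγ0 hγ1)

end Matrix

section ExponentialWeights

open Real

lemma Real.exp_sub_one_le_mul_exp (w : ℝ) : exp w - 1 ≤ w * exp w := by
  have h := mul_le_mul_of_nonneg_left (add_one_le_exp (-w)) (exp_pos w).le
  rw [← exp_add, add_neg_cancel, exp_zero] at h
  linarith

variable {ι : Type*} [Fintype ι] {q : ι → ℝ}

-- The gap is `KL(p ‖ q)` for the tilted distribution `p i = q i exp (x i) / Z`.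
lemma log_sum_mul_exp_le (hq0 : ∀ i, 0 ≤ q i) (hq1 : ∑ i, q i = 1) (x : ι → ℝ) :
    log (∑ i, q i * exp (x i)) ≤ ∑ i, q i * exp (x i) / (∑ j, q j * exp (x j)) * x i := by
  set Z := ∑ j, q j * exp (x j)
  have hZ : 0 < Z := by
    obtain ⟨i, -, hi⟩ := exists_lt_of_sum_lt (by simp [hq1] : ∑ _i : ι, (0 : ℝ) < ∑ i, q i)
    exact sum_pos' (fun j _ => mul_nonneg (hq0 j) (exp_pos _).le)
      ⟨i, mem_univ i, mul_pos hi (exp_pos _)⟩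
  have hpt : ∀ i, q i * exp (x i) / Z * log Z + (q i * exp (x i) / Z - q i)
      ≤ q i * exp (x i) / Z * x i := by
    intro i
    have hw : exp (x i) / Z = exp (x i - log Z) := by rw [exp_sub, exp_log hZ]
    have := mul_le_mul_of_nonneg_left (exp_sub_one_le_mul_exp (x i - log Z)) (hq0 i)
    rw [mul_div_assoc, hw]
    linarith
  have hp1 : ∑ i, q i * exp (x i) / Z = 1 := by rw [← sum_div, div_self hZ.ne']
  calc log Z = ∑ i, (q i * exp (x i) / Z * log Z + (q i * exp (x i) / Z - q i)) := by
        rw [sum_add_distrib, ← sum_mul, sum_sub_distrib, hp1, hq1]; ring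
    _ ≤ _ := sum_le_sum fun i _ => hpt i

lemma one_le_sum_mul_exp (hq0 : ∀ i, 0 ≤ q i) (hq1 : ∑ i, q i = 1) {x : ι → ℝ}
    (hx : ∑ i, q i * x i = 0) : 1 ≤ ∑ i, q i * exp (x i) :=
  calc 1 = ∑ i, q i * (x i + 1) := by simp [mul_add, sum_add_distrib, hx, hq1]
    _ ≤ _ := sum_le_sum fun i _ => mul_le_mul_of_nonneg_left (add_one_le_exp _) (hq0 i)

end ExponentialWeights

section MDP

variable {S A : Type*} [Fintype S] [Fintype A]

def transitionMatrix (P : S → A → S → ℝ) (π : S → A → ℝ) : Matrix S S ℝ :=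
  Matrix.of fun s s' => ∑ a, π s a * P s a s'

def expectedReward (π r : S → A → ℝ) (s : S) : ℝ := ∑ a, π s a * r s a

variable [DecidableEq S] {P : S → A → S → ℝ} {π : S → A → ℝ} {ρ : S → ℝ} {r : S → A → ℝ} {γ : ℝ}

lemma transitionMatrix_mem_rowStochastic (hP0 : ∀ s a s', 0 ≤ P s a s')
    (hP1 : ∀ s a, ∑ s', P s a s' = 1) (hπ0 : ∀ s a, 0 ≤ π s a) (hπ1 : ∀ s, ∑ a, π s a = 1) :
    transitionMatrix P π ∈ rowStochastic ℝ S := by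
  refine mem_rowStochastic_iff_sum.mpr ⟨fun s s' => ?_, fun s => ?_⟩
  · exact sum_nonneg fun a _ => mul_nonneg (hπ0 s a) (hP0 s a s')
  · simp only [transitionMatrix, of_apply]
    rw [sum_comm]
    simp [← mul_sum, hP1, hπ1]

lemma stateDist_eq_vecMul (t : ℕ) :
    stateDist P π ρ t = ρ ᵥ* transitionMatrix P π ^ t := by
  induction t with
  | zero => simp [stateDist]
  | succ t ih =>
    ext s'
    rw [pow_succ, ← vecMul_vecMul, ← ih]
    simp [stateDist, vecMul, dotProduct, transitionMatrix, mul_sum, mul_assoc]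

lemma hasSum_pow_smul_stateDist (hM : transitionMatrix P π ∈ rowStochastic ℝ S)
    (hγ0 : 0 ≤ γ) (hγ1 : γ < 1) :
    HasSum (fun t : ℕ => γ ^ t • stateDist P π ρ t) (ρ ᵥ* (1 - γ • transitionMatrix P π)⁻¹) := by
  simp_rw [stateDist_eq_vecMul, ← vecMul_smul]
  exact (hasSum_pow_smul_pow_of_mem_rowStochastic hM hγ0 hγ1).map
    (AddMonoidHom.mk' (ρ ᵥ* ·) (vecMul_add · · ρ)) (continuous_const.matrix_vecMul continuous_id)

lemma dOcc_eq_vecMul (hM : transitionMatrix P π ∈ rowStochastic ℝ S)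
    (hγ0 : 0 ≤ γ) (hγ1 : γ < 1) :
    dOcc P π ρ γ = (1 - γ) • (ρ ᵥ* (1 - γ • transitionMatrix P π)⁻¹) := by
  ext s
  exact congrArg _ (Pi.hasSum.mp (hasSum_pow_smul_stateDist hM hγ0 hγ1) s).tsum_eq

lemma Jret_eq_vecMul_dotProduct (hM : transitionMatrix P π ∈ rowStochastic ℝ S)
    (hγ0 : 0 ≤ γ) (hγ1 : γ < 1) :
    Jret P π ρ r γ = (ρ ᵥ* (1 - γ • transitionMatrix P π)⁻¹) ⬝ᵥ expectedReward π r := by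
  have h := hasSum_sum fun s (_ : s ∈ univ) =>
    (Pi.hasSum.mp (hasSum_pow_smul_stateDist (ρ := ρ) hM hγ0 hγ1) s).mul_right
      (expectedReward π r s)
  have hsummand : (fun t : ℕ => γ ^ t * ∑ s, ∑ a, stateDist P π ρ t s * π s a * r s a)
      = fun t => ∑ s, (γ ^ t • stateDist P π ρ t) s * expectedReward π r s := by
    ext t
    simp only [Pi.smul_apply, smul_eq_mul, expectedReward, mul_sum, mul_assoc]
  rw [Jret, hsummand]
  exact h.tsum_eq

lemma Vval_eq_mulVec (hM : transitionMatrix P π ∈ rowStochastic ℝ S)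
    (hγ0 : 0 ≤ γ) (hγ1 : γ < 1) :
    Vval P π r γ = (1 - γ • transitionMatrix P π)⁻¹ *ᵥ expectedReward π r := by
  ext s
  have hδ : (fun s' => if s' = s then (1 : ℝ) else 0) = Pi.single s 1 := by
    ext s'; simp [Pi.single_apply]
  rw [Vval, Jret_eq_vecMul_dotProduct hM hγ0 hγ1, hδ, ← dotProduct_mulVec, single_dotProduct,
    one_mul]

lemma Jret_eq_dotProduct_Vval (hM : transitionMatrix P π ∈ rowStochastic ℝ S)
    (hγ0 : 0 ≤ γ) (hγ1 : γ < 1) : Jret P π ρ r γ = ρ ⬝ᵥ Vval P π r γ := by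
  rw [Jret_eq_vecMul_dotProduct hM hγ0 hγ1, Vval_eq_mulVec hM hγ0 hγ1, dotProduct_mulVec]

lemma stateDist_nonneg (hM : transitionMatrix P π ∈ rowStochastic ℝ S) (hρ0 : ∀ s, 0 ≤ ρ s)
    (t : ℕ) (s : S) : 0 ≤ stateDist P π ρ t s := by
  rw [stateDist_eq_vecMul]
  exact nonneg_vecMul_of_mem_rowStochastic (pow_mem hM t) hρ0 s

lemma dOcc_nonneg (hM : transitionMatrix P π ∈ rowStochastic ℝ S) (hρ0 : ∀ s, 0 ≤ ρ s)
    (hγ0 : 0 ≤ γ) (hγ1 : γ < 1) (s : S) : 0 ≤ dOcc P π ρ γ s :=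
  mul_nonneg (sub_nonneg.mpr hγ1.le)
    (tsum_nonneg fun t => mul_nonneg (pow_nonneg hγ0 t) (stateDist_nonneg hM hρ0 t s))

lemma sum_mul_Aval_eq {p q : S → A → ℝ} (hp1 : ∀ s, ∑ a, p s a = 1) :
    (fun s => ∑ a, p s a * Aval P q r γ s a)
      = expectedReward p r - (1 - γ • transitionMatrix P p) *ᵥ Vval P q r γ := by
  ext s
  simp only [Aval, Qval, sub_mulVec, one_mulVec, smul_mulVec, Pi.sub_apply, Pi.smul_apply,
    smul_eq_mul, mulVec, dotProduct, transitionMatrix, of_apply, expectedReward]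
  rw [sum_congr rfl fun a _ => mul_sub (p s a) _ _, sum_sub_distrib, ← sum_mul, hp1, one_mul]
  simp only [mul_add, sum_add_distrib, mul_sum, sum_mul]
  rw [sum_comm (s := univ) (t := univ)]
  simp only [mul_left_comm, mul_assoc]
  ring

lemma sum_mul_Aval_self_eq_zero (hM : transitionMatrix P π ∈ rowStochastic ℝ S)
    (hπ1 : ∀ s, ∑ a, π s a = 1) (hγ0 : 0 ≤ γ) (hγ1 : γ < 1) (s : S) :
    ∑ a, π s a * Aval P π r γ s a = 0 := by
  have hbellman : (1 - γ • transitionMatrix P π) *ᵥ Vval P π r γ = expectedReward π r := by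
    rw [Vval_eq_mulVec hM hγ0 hγ1, mulVec_mulVec,
      one_sub_smul_mul_inv_of_mem_rowStochastic hM hγ0 hγ1, one_mulVec]
  have h := congrFun (sum_mul_Aval_eq (P := P) (r := r) (γ := γ) (q := π) hπ1) s
  rwa [hbellman, sub_self] at h

lemma Jret_sub_Jret_eq {p q : S → A → ℝ} (hMp : transitionMatrix P p ∈ rowStochastic ℝ S)
    (hMq : transitionMatrix P q ∈ rowStochastic ℝ S) (hp1 : ∀ s, ∑ a, p s a = 1)
    (hγ0 : 0 ≤ γ) (hγ1 : γ < 1) :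
    Jret P p ρ r γ - Jret P q ρ r γ
      = (1 - γ)⁻¹ * ∑ s, dOcc P p ρ γ s * ∑ a, p s a * Aval P q r γ s a := by
  have hocc : ∑ s, dOcc P p ρ γ s * ∑ a, p s a * Aval P q r γ s a
      = dOcc P p ρ γ ⬝ᵥ fun s => ∑ a, p s a * Aval P q r γ s a := rfl
  rw [hocc, dOcc_eq_vecMul hMp hγ0 hγ1, smul_dotProduct, smul_eq_mul, ← mul_assoc,
    inv_mul_cancel₀ (sub_ne_zero.mpr hγ1.ne'), one_mul, sum_mul_Aval_eq hp1, dotProduct_sub,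
    ← Jret_eq_vecMul_dotProduct hMp hγ0 hγ1, dotProduct_mulVec, vecMul_vecMul,
    inv_one_sub_smul_mul_of_mem_rowStochastic hMp hγ0 hγ1, vecMul_one,
    ← Jret_eq_dotProduct_Vval hMq hγ0 hγ1]

end MDP

theorem stmt_10_general {S A : Type*} [Fintype S] [Fintype A] [DecidableEq S]
    (γ : ℝ) (hγ0 : 0 ≤ γ) (hγ1 : γ < 1)
    (P : S → A → S → ℝ) (hP0 : ∀ s a s', 0 ≤ P s a s') (hP1 : ∀ s a, ∑ s', P s a s' = 1)
    (r : S → A → ℝ)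
    (ρ : S → ℝ) (hρ0 : ∀ s, 0 ≤ ρ s)
    (η H : ℝ) (hη : 0 < η) (hH : H = 1 / (1 - γ))
    (π : ℕ → S → A → ℝ)
    (hπ0 : ∀ k s a, 0 ≤ π k s a) (hπ1 : ∀ k s, ∑ a, π k s a = 1)
    (hrec : ∀ k s a, π (k + 1) s a =
      π k s a * Real.exp (η * H * Aval P (π k) r γ s a) / Znorm P r γ η H π k s) :
    ∀ k, (Jret P (π (k + 1)) ρ r γ - Jret P (π k) ρ r γ ≥
        (1 / η) * ∑ s, dOcc P (π (k + 1)) ρ γ s * Real.log (Znorm P r γ η H π k s)) ∧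
      ∀ s, 0 ≤ Real.log (Znorm P r γ η H π k s) := by
  intro k
  have hM : ∀ j, transitionMatrix P (π j) ∈ rowStochastic ℝ S := fun j =>
    transitionMatrix_mem_rowStochastic hP0 hP1 (hπ0 j) (hπ1 j)
  have hZ_one : ∀ s, 1 ≤ Znorm P r γ η H π k s := fun s =>
    one_le_sum_mul_exp (hπ0 k s) (hπ1 k s) (by
      simp_rw [mul_left_comm _ (η * H), ← mul_sum,
        sum_mul_Aval_self_eq_zero (hM k) (hπ1 k) hγ0 hγ1 s, mul_zero])
  refine ⟨?_, fun s => Real.log_nonneg (hZ_one s)⟩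
  have hstep : ∀ s, 1 / η * Real.log (Znorm P r γ η H π k s)
      ≤ H * ∑ a, π (k + 1) s a * Aval P (π k) r γ s a := by
    intro s
    have hgibbs : Real.log (Znorm P r γ η H π k s)
        ≤ η * H * ∑ a, π (k + 1) s a * Aval P (π k) r γ s a := by
      simp only [mul_sum, mul_left_comm (η * H), hrec]
      exact log_sum_mul_exp_le (hπ0 k s) (hπ1 k s) _
    calc 1 / η * Real.log (Znorm P r γ η H π k s)
        ≤ 1 / η * (η * H * ∑ a, π (k + 1) s a * Aval P (π k) r γ s a) := by gcongr
      _ = H * ∑ a, π (k + 1) s a * Aval P (π k) r γ s a := by field_simp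
  rw [Jret_sub_Jret_eq (hM (k + 1)) (hM k) (hπ1 (k + 1)) hγ0 hγ1, ← one_div, ← hH, mul_sum,
    mul_sum, ge_iff_le]
  refine sum_le_sum fun s _ => ?_
  rw [mul_left_comm, mul_left_comm H]
  exact mul_le_mul_of_nonneg_left (hstep s) (dOcc_nonneg (hM (k + 1)) hρ0 hγ0 hγ1 s)

/-- Lower bound on policy improvement in the empirical MDP `M̂` (Lemma 5 of Agarwal et al.):
for exponentiated-advantage updates `π^{k+1}(a|s) = π^k(a|s) exp(η H Â^k(s,a)) / Z_k(s)`,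
every step satisfies `Ĵ(π^{k+1}) - Ĵ(π^k) ≥ (1/η) E_{s ~ d^{π^{k+1}}}[log Z_k(s)]`, and
`log Z_k(s) ≥ 0` for every `s`. -/
theorem stmt_10 {S A : Type*} [Fintype S] [Fintype A] [DecidableEq S]
    (γ : ℝ) (hγ0 : 0 ≤ γ) (hγ1 : γ < 1)
    (P : S → A → S → ℝ) (hP0 : ∀ s a s', 0 ≤ P s a s') (hP1 : ∀ s a, ∑ s', P s a s' = 1)
    (r : S → A → ℝ) (hr : ∀ s a, |r s a| ≤ 1)
    (ρ : S → ℝ) (hρ0 : ∀ s, 0 ≤ ρ s) (hρ1 : ∑ s, ρ s = 1)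
    (η H : ℝ) (hη : 0 < η) (hH : H = 1 / (1 - γ))
    (π : ℕ → S → A → ℝ)
    (hπ0 : ∀ k s a, 0 ≤ π k s a) (hπ1 : ∀ k s, ∑ a, π k s a = 1)
    (hrec : ∀ k s a, π (k + 1) s a =
      π k s a * Real.exp (η * H * Aval P (π k) r γ s a) / Znorm P r γ η H π k s) :
    ∀ k, (Jret P (π (k + 1)) ρ r γ - Jret P (π k) ρ r γ ≥
        (1 / η) * ∑ s, dOcc P (π (k + 1)) ρ γ s * Real.log (Znorm P r γ η H π k s)) ∧
      ∀ s, 0 ≤ Real.log (Znorm P r γ η H π k s) :=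
  stmt_10_general γ hγ0 hγ1 P hP0 hP1 r ρ hρ0 η H hη hH π hπ0 hπ1 hrec
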